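/- Let F be a finite field, A a nonempty finite subset of F, and a₁, a₂, b ∈ F with a₁ ≠ 0, a₂ ≠ 0, b ≠ 0, such that a₁·A ∩ b·A and a₂·A ∩ b·A are nonempty. Then |a₁a₂·A + b²·A| ≤ |A+A|⁴ / (|a₁·A ∩ b·A| · |a₂·A ∩ b·A| · |A|). -/

import Mathlib

open Pointwise Finset

/-!
Ruzsa's triangle inequality `|X + Z| |C| ≤ |X + C| |C + Z|` with a pivot `C ⊆ X` gives
`|X + Z| |C| ≤ |X + X| |C + Z|`. Pivoting on `B₁ = a₁A ∩ bA`, rescaled by `a₂` so that it lies in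
both `a₁a₂A` and `b·a₂A`, bounds `|a₁a₂A + b²A| |B₁|` by `|A + A| |a₂A + bA|`; pivoting on
`B₂ = a₂A ∩ bA` bounds `|a₂A + bA| |B₂|` by `|A + A|²`. Finally `|A| ≤ |A + A|`.
-/

section AddCommGroup

variable {G : Type*} [AddCommGroup G] [DecidableEq G]

lemma card_add_mul_card_le_of_subset {X C : Finset G} (hCX : C ⊆ X) (Z : Finset G) :
    #(X + Z) * #C ≤ #(X + X) * #(C + Z) :=
  (ruzsa_triangle_inequality_add_add_add X C Z).trans <|
    Nat.mul_le_mul_right _ (card_le_card (add_subset_add_left hCX))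

lemma card_add_mul_card_inter_le (X Y : Finset G) :
    #(X + Y) * #(X ∩ Y) ≤ #(X + X) * #(Y + Y) :=
  (card_add_mul_card_le_of_subset inter_subset_left Y).trans <|
    Nat.mul_le_mul_left _ (card_le_card (add_subset_add_right inter_subset_right))

end AddCommGroup

section Field

variable {F : Type*} [Field F] [DecidableEq F]

lemma card_smul_add_smul_le (A : Finset F) (a : F) : #(a • A + a • A) ≤ #(A + A) := by
  rw [← smul_add]
  exact card_smul_finset_le

lemma card_smul_add_smul_mul_card_inter_le (A : Finset F) (a b : F) :
    #(a • A + b • A) * #(a • A ∩ b • A) ≤ #(A + A) ^ 2 :=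
  calc #(a • A + b • A) * #(a • A ∩ b • A)
      ≤ #(a • A + a • A) * #(b • A + b • A) := card_add_mul_card_inter_le _ _
    _ ≤ #(A + A) * #(A + A) :=
        Nat.mul_le_mul (card_smul_add_smul_le A a) (card_smul_add_smul_le A b)
    _ = #(A + A) ^ 2 := (sq _).symm

lemma card_mul_smul_add_sq_smul_mul_card_inter_le (A : Finset F) (a₁ b : F) {a₂ : F}
    (ha₂ : a₂ ≠ 0) :
    #((a₁ * a₂) • A + b ^ 2 • A) * #(a₁ • A ∩ b • A) ≤ #(A + A) * #(a₂ • A + b • A) := by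
  have hpivot : a₂ • (a₁ • A ∩ b • A) ⊆ (a₁ * a₂) • A := by
    rw [mul_comm, ← smul_smul]
    exact smul_finset_subset_smul_finset inter_subset_left
  have hpivot_add : a₂ • (a₁ • A ∩ b • A) + b ^ 2 • A ⊆ b • (a₂ • A + b • A) := by
    rw [smul_add, smul_smul, smul_smul, mul_comm, ← sq, ← smul_smul]
    exact add_subset_add_right (smul_finset_subset_smul_finset inter_subset_right)
  calc #((a₁ * a₂) • A + b ^ 2 • A) * #(a₁ • A ∩ b • A)
      = #((a₁ * a₂) • A + b ^ 2 • A) * #(a₂ • (a₁ • A ∩ b • A)) := by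
        rw [card_smul_finset₀ ha₂]
    _ ≤ #((a₁ * a₂) • A + (a₁ * a₂) • A) * #(a₂ • (a₁ • A ∩ b • A) + b ^ 2 • A) :=
        card_add_mul_card_le_of_subset hpivot _
    _ ≤ #(A + A) * #(a₂ • A + b • A) :=
        Nat.mul_le_mul (card_smul_add_smul_le A _)
          ((card_le_card hpivot_add).trans card_smul_finset_le)

lemma card_mul_smul_add_sq_smul_mul_card_inter_mul_card_inter_mul_card_le
    (A : Finset F) {a₁ a₂ b : F} (ha₂ : a₂ ≠ 0) :
    #((a₁ * a₂) • A + b ^ 2 • A) * #(a₁ • A ∩ b • A) * #(a₂ • A ∩ b • A) * #A ≤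
      #(A + A) ^ 4 :=
  calc #((a₁ * a₂) • A + b ^ 2 • A) * #(a₁ • A ∩ b • A) * #(a₂ • A ∩ b • A) * #A
      ≤ #(A + A) * #(a₂ • A + b • A) * #(a₂ • A ∩ b • A) * #(A + A) := by
        gcongr ?_ * _ * ?_
        · exact card_mul_smul_add_sq_smul_mul_card_inter_le A a₁ b ha₂
        · exact card_le_card_add_self
    _ = #(A + A) * (#(a₂ • A + b • A) * #(a₂ • A ∩ b • A)) * #(A + A) := by ring
    _ ≤ #(A + A) * #(A + A) ^ 2 * #(A + A) := by
        gcongr _ * ?_ * _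
        exact card_smul_add_smul_mul_card_inter_le A a₂ b
    _ = #(A + A) ^ 4 := by ring

end Field

theorem garaev_corollary_1_8_sum_general {F : Type*} [Field F] [DecidableEq F]
    (A : Finset F) (hA : A.Nonempty) (a₁ a₂ b : F)
    (ha₂ : a₂ ≠ 0)
    (h₁ : (a₁ • A ∩ b • A).Nonempty) (h₂ : (a₂ • A ∩ b • A).Nonempty) :
    (((a₁ * a₂) • A + (b ^ 2) • A).card : ℝ) ≤
      ((A + A).card : ℝ) ^ 4 /
        (((a₁ • A ∩ b • A).card : ℝ) * ((a₂ • A ∩ b • A).card : ℝ) * (A.card : ℝ)) := by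
  have hden : (0 : ℝ) < #(a₁ • A ∩ b • A) * #(a₂ • A ∩ b • A) * #A := by
    have := h₁.card_pos
    have := h₂.card_pos
    have := hA.card_pos
    positivity
  rw [le_div_iff₀ hden, ← mul_assoc, ← mul_assoc]
  exact_mod_cast card_mul_smul_add_sq_smul_mul_card_inter_mul_card_inter_mul_card_le A ha₂

/-- Corollary 1.8, first inequality:
`|a₁a₂A + b²A| ≤ |A+A|⁴ / (|a₁A ∩ bA| |a₂A ∩ bA| |A|)`. -/
theorem garaev_corollary_1_8_sum {F : Type*} [Field F] [Fintype F] [DecidableEq F]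
    (A : Finset F) (hA : A.Nonempty) (a₁ a₂ b : F)
    (ha₁ : a₁ ≠ 0) (ha₂ : a₂ ≠ 0) (hb : b ≠ 0)
    (h₁ : (a₁ • A ∩ b • A).Nonempty) (h₂ : (a₂ • A ∩ b • A).Nonempty) :
    (((a₁ * a₂) • A + (b ^ 2) • A).card : ℝ) ≤
      ((A + A).card : ℝ) ^ 4 /
        (((a₁ • A ∩ b • A).card : ℝ) * ((a₂ • A ∩ b • A).card : ℝ) * (A.card : ℝ)) :=
  garaev_corollary_1_8_sum_general A hA a₁ a₂ b ha₂ h₁ h₂
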